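/- Let A ∈ M_2(ℂ)^{⊗n}, let B_d = (T_{1−1/(3d)} − T_{1−1/(2d)})(A) denote the soft chunk of A of degree d, and define G_good = {d = 2^l, l a nonnegative integer : d·W_{≈d}[A] ≥ (1/20)·Inf[B_d]}. Then Var[A] ≤ 2·Σ_{d ∈ G_good} W_{≈d}[A]. -/

import Mathlib

open scoped BigOperators
open Matrix

noncomputable section

/-- The index set of the `n`-qubit Hilbert space `(ℂ²)^{⊗n}`. -/
abbrev QIdx (n : ℕ) := Fin n → Fin 2

/-- The algebra `M_2(ℂ)^{⊗n} ≅ M_{2^n}(ℂ)` of observables on `n` qubits. -/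
abbrev QOp (n : ℕ) := Matrix (QIdx n) (QIdx n) ℂ

/-- The four Pauli matrices `σ_0, σ_1, σ_2, σ_3`. -/
def pauli : Fin 4 → Matrix (Fin 2) (Fin 2) ℂ :=
  ![!![1, 0; 0, 1], !![0, 1; 1, 0], !![0, -Complex.I; Complex.I, 0], !![1, 0; 0, -1]]

/-- The Pauli string `σ_s = σ_{s_1} ⊗ ⋯ ⊗ σ_{s_n}`. -/
def pauliString {n : ℕ} (s : Fin n → Fin 4) : QOp n :=
  Matrix.of fun x y => ∏ j, pauli (s j) (x j) (y j)

/-- The normalized trace `τ(A) = 2^{-n} tr(A)`. -/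
def ntrace {n : ℕ} (A : QOp n) : ℂ := (2 ^ n : ℂ)⁻¹ * A.trace

/-- The Pauli (Fourier) coefficient `Â_s = τ(σ_s A)`. -/
def coef {n : ℕ} (A : QOp n) (s : Fin n → Fin 4) : ℂ := ntrace (pauliString s * A)

/-- The support `{j : s_j ≠ 0}` of a Pauli index. -/
def psupp {n : ℕ} (s : Fin n → Fin 4) : Finset (Fin n) :=
  Finset.univ.filter fun j => s j ≠ 0

/-- `τ(|A|^p)`, computed via the eigenvalues of `Aᴴ A` (so `|A| = (AᴴA)^{1/2}`). -/
def traceAbsPow {n : ℕ} (p : ℝ) (A : QOp n) : ℝ :=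
  (2 ^ n : ℝ)⁻¹ * ∑ i, ((Matrix.isHermitian_conjTranspose_mul_self A).eigenvalues i) ^ (p / 2)

/-- The normalized Schatten `p`-norm `‖A‖_p = τ(|A|^p)^{1/p}`. -/
def pnorm {n : ℕ} (p : ℝ) (A : QOp n) : ℝ := traceAbsPow p A ^ (1 / p)

/-- The operator norm `‖A‖ = ‖A‖_∞`. -/
def opNorm {n : ℕ} (A : QOp n) : ℝ := ‖Matrix.toEuclideanCLM (𝕜 := ℂ) A‖

/-- The `j`-th derivative `d_j(A) = (I - E_j)(A) = ∑_{s : s_j ≠ 0} Â_s σ_s`. -/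
def dOp {n : ℕ} (j : Fin n) (A : QOp n) : QOp n :=
  ∑ s ∈ Finset.univ.filter (fun s : Fin n → Fin 4 => s j ≠ 0), coef A s • pauliString s

/-- The derivative `d_J = ∏_{j ∈ J} d_j` for a subset `J ⊆ [n]`:
`d_J(A) = ∑_{s : J ⊆ supp s} Â_s σ_s`. -/
def dSet {n : ℕ} (J : Finset (Fin n)) (A : QOp n) : QOp n :=
  ∑ s ∈ Finset.univ.filter (fun s : Fin n → Fin 4 => ∀ j ∈ J, s j ≠ 0),
    coef A s • pauliString s

/-- The conditional expectation `E_J` killing all Pauli terms meeting `J`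
(i.e. the normalized partial trace `τ_J` over the qubits in `J`, re-embedded in
`M_2(ℂ)^{⊗n}` by tensoring with the identity on the qubits in `J`). -/
def eSet {n : ℕ} (J : Finset (Fin n)) (A : QOp n) : QOp n :=
  ∑ s ∈ Finset.univ.filter (fun s : Fin n → Fin 4 => ∀ j ∈ J, s j = 0),
    coef A s • pauliString s

/-- `σ_{k(j)}` : the Pauli matrix `σ_k` on the `j`-th factor and identity elsewhere. -/
def sigmaAt {n : ℕ} (j : Fin n) (k : Fin 4) : QOp n :=
  pauliString fun i => if i = j then k else 0

/-- The `j`-th `L^p`-influence `Inf^p_j[A] = ‖d_j(A)‖_p^p`. -/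
def infP {n : ℕ} (p : ℝ) (j : Fin n) (A : QOp n) : ℝ := traceAbsPow p (dOp j A)

/-- The total `L^p`-influence `Inf^p[A] = ∑_j Inf^p_j[A]`. -/
def infPTotal {n : ℕ} (p : ℝ) (A : QOp n) : ℝ := ∑ j, infP p j A

/-- The `L^p`-influence of a subset, `Inf^p_J[A] = ‖d_J(A)‖_p^p`. -/
def infPSet {n : ℕ} (p : ℝ) (J : Finset (Fin n)) (A : QOp n) : ℝ := traceAbsPow p (dSet J A)

/-- The variance `Var[A] = ‖A - τ(A)1‖_2²`. -/
def var {n : ℕ} (A : QOp n) : ℝ := traceAbsPow 2 (A - ntrace A • 1)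

/-- The noise operator `T_δ(A) = ∑_s δ^{|supp s|} Â_s σ_s`. -/
def noiseOp {n : ℕ} (δ : ℝ) (A : QOp n) : QOp n :=
  ∑ s : Fin n → Fin 4, ((δ : ℂ) ^ (psupp s).card * coef A s) • pauliString s

/-- The soft chunk `B_d = (T_{1-1/(3d)} - T_{1-1/(2d)})(A)`. -/
def softChunk {n : ℕ} (d : ℕ) (A : QOp n) : QOp n :=
  noiseOp (1 - 1 / (3 * (d : ℝ))) A - noiseOp (1 - 1 / (2 * (d : ℝ))) A

/-- `W_{≥k}[A] = ∑_{|supp s| ≥ k} |Â_s|²`. -/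
def wGE {n : ℕ} (k : ℕ) (A : QOp n) : ℝ :=
  ∑ s ∈ Finset.univ.filter (fun s : Fin n → Fin 4 => k ≤ (psupp s).card), ‖coef A s‖ ^ 2

/-- `W_{≈d}[A] = ∑_{d ≤ |supp s| < 2d} |Â_s|²`. -/
def wApprox {n : ℕ} (d : ℕ) (A : QOp n) : ℝ :=
  ∑ s ∈ Finset.univ.filter
      (fun s : Fin n → Fin 4 => d ≤ (psupp s).card ∧ (psupp s).card < 2 * d),
    ‖coef A s‖ ^ 2

/-- `W_J(A) = ∑_{|supp v ∩ J| = 1} |Â_v|²`. -/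
def wSet {n : ℕ} (J : Finset (Fin n)) (A : QOp n) : ℝ :=
  ∑ v ∈ Finset.univ.filter (fun v : Fin n → Fin 4 => (psupp v ∩ J).card = 1), ‖coef A v‖ ^ 2

/-- The noise stability `S_δ[A] = ∑_{s ≠ 0} δ^{|supp s|} |Â_s|²`. -/
def noiseStab {n : ℕ} (δ : ℝ) (A : QOp n) : ℝ :=
  ∑ s ∈ Finset.univ.filter (fun s : Fin n → Fin 4 => s ≠ 0),
    δ ^ (psupp s).card * ‖coef A s‖ ^ 2

/-- The partial Fourier series `∂_J^γ(A) = ∑_{s : s_J = γ} Â_s σ_{s_{J^c}}`,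
encoded by a single Pauli index `v` with `supp v = J` and `v|_J = γ ∈ {1,2,3}^J`,
re-embedded in `M_2(ℂ)^{⊗n}` by tensoring with the identity on the qubits in `J`. -/
def dPartial {n : ℕ} (v : Fin n → Fin 4) (A : QOp n) : QOp n :=
  ∑ s ∈ Finset.univ.filter (fun s : Fin n → Fin 4 => ∀ j ∈ psupp v, s j = v j),
    coef A s • pauliString fun j => if j ∈ psupp v then 0 else s j

/-!
By Parseval, `Var[A] = ∑_{s ≠ 0} |Â_s|²` is the sum of the dyadic weights `W_{≈2^l}[A]`, and
`Inf[B_d] = ∑_s |s| β_d(|s|)² |Â_s|²` with `β_d(k) = (1 - 1/(3d))^k - (1 - 1/(2d))^k`.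
A bad scale has `W_{≈2^l} < Inf[B_{2^l}] / (20 · 2^l)`, so it suffices that
`∑_l Inf[B_{2^l}] / 2^l ≤ 10 Var[A]`, i.e. that `∑_l (k / 2^l) β_{2^l}(k)² ≤ 10` for every `k`.
By Bernoulli's inequality `0 ≤ β_d(k) ≤ (1 - 1/(3d))^k ≤ 3 / (3 + x)` with `x = k/d`, so each term is
at most `10 x / ((1 + x)(2 + x)) = 10 (g(x) - g(x/2))` for `g(x) = x / (1 + x)`, and the sum
telescopes to at most `10`. Hence the bad scales carry at most half of the variance.
-/

open Finset

section

variable {n : ℕ}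

lemma pauli_orthogonality (k k' : Fin 4) :
    ∑ a, ∑ b, pauli k a b * pauli k' b a = if k = k' then 2 else 0 := by
  fin_cases k <;> fin_cases k' <;> simp [pauli, Fin.sum_univ_succ] <;> norm_num [Complex.ext_iff]

lemma pauli_completeness (a b c d : Fin 2) :
    ∑ k, pauli k a b * starRingEnd ℂ (pauli k c d) = if a = c ∧ b = d then 2 else 0 := by
  fin_cases a <;> fin_cases b <;> fin_cases c <;> fin_cases d <;>
    simp [pauli, Fin.sum_univ_succ] <;> norm_num [Complex.ext_iff]

lemma prod_ite_const_zero {ι M : Type*} [Fintype ι] [CommMonoidWithZero M] (p : ι → Prop)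
    [DecidablePred p] (c : M) :
    (∏ i, if p i then c else 0) = if ∀ i, p i then c ^ Fintype.card ι else 0 := by
  rw [Fintype.prod_ite_zero, prod_const, card_univ]

lemma trace_pauliString_mul (s t : Fin n → Fin 4) :
    (pauliString s * pauliString t).trace = if s = t then 2 ^ n else 0 := by
  simp only [Matrix.trace, Matrix.diag, Matrix.mul_apply, pauliString, Matrix.of_apply,
    ← prod_mul_distrib]
  have inner : ∀ x : QIdx n,
      ∑ y : QIdx n, ∏ j, pauli (s j) (x j) (y j) * pauli (t j) (y j) (x j) =
        ∏ j, ∑ b, pauli (s j) (x j) b * pauli (t j) b (x j) := fun x =>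
    (Fintype.prod_sum fun j b => pauli (s j) (x j) b * pauli (t j) b (x j)).symm
  simp only [inner]
  rw [← Fintype.prod_sum fun j a => ∑ b, pauli (s j) a b * pauli (t j) b a]
  simp only [pauli_orthogonality, prod_ite_const_zero, Fintype.card_fin, funext_iff]

lemma pauliString_completeness (x y x' y' : QIdx n) :
    ∑ s : Fin n → Fin 4, pauliString s x y * starRingEnd ℂ (pauliString s x' y') =
      if x = x' ∧ y = y' then 2 ^ n else 0 := by
  simp only [pauliString, Matrix.of_apply, map_prod, ← prod_mul_distrib]
  rw [← Fintype.prod_sum fun j k => pauli k (x j) (y j) * starRingEnd ℂ (pauli k (x' j) (y' j))]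
  simp only [pauli_completeness, prod_ite_const_zero, Fintype.card_fin, funext_iff, forall_and]

lemma pauliString_zero : pauliString (0 : Fin n → Fin 4) = 1 := by
  have h0 : pauli 0 = 1 := by ext a b; fin_cases a <;> fin_cases b <;> simp [pauli]
  ext x y
  simp only [pauliString, Matrix.of_apply, Pi.zero_apply, h0, Matrix.one_apply,
    Fintype.prod_ite_zero, prod_const_one, funext_iff]

lemma coef_sub (A B : QOp n) (s : Fin n → Fin 4) : coef (A - B) s = coef A s - coef B s := by
  simp only [coef, ntrace, Matrix.trace_sub, mul_sub]

lemma coef_smul (c : ℂ) (A : QOp n) (s : Fin n → Fin 4) : coef (c • A) s = c * coef A s := by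
  simp only [coef, ntrace, Matrix.mul_smul, Matrix.trace_smul, smul_eq_mul]
  ring

lemma coef_sum {ι : Type*} (I : Finset ι) (f : ι → QOp n) (s : Fin n → Fin 4) :
    coef (∑ i ∈ I, f i) s = ∑ i ∈ I, coef (f i) s := by
  simp only [coef, ntrace, Matrix.trace_sum, mul_sum]

lemma coef_pauliString (t s : Fin n → Fin 4) :
    coef (pauliString t) s = if s = t then 1 else 0 := by
  rw [coef, ntrace, trace_pauliString_mul]
  split_ifs <;> simp

lemma coef_zero_eq_ntrace (A : QOp n) : coef A 0 = ntrace A := by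
  rw [coef, pauliString_zero, Matrix.one_mul]

lemma coef_one (s : Fin n → Fin 4) : coef (1 : QOp n) s = if s = 0 then 1 else 0 := by
  rw [← pauliString_zero, coef_pauliString]

lemma coef_sum_smul_pauliString (c : (Fin n → Fin 4) → ℂ) (s : Fin n → Fin 4) :
    coef (∑ t, c t • pauliString t) s = c s := by
  simp [coef_sum, coef_smul, coef_pauliString]

lemma traceAbsPow_two (A : QOp n) :
    traceAbsPow 2 A = (2 ^ n : ℝ)⁻¹ * ∑ x, ∑ y, ‖A x y‖ ^ 2 := by
  have hA := Matrix.isHermitian_conjTranspose_mul_self A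
  have htr : ∑ i, hA.eigenvalues i = ∑ x, ∑ y, ‖A x y‖ ^ 2 := by
    apply RCLike.ofReal_injective (K := ℂ)
    rw [RCLike.ofReal_sum, ← hA.trace_eq_sum_eigenvalues, sum_comm]
    simp [Matrix.trace, Matrix.mul_apply, Complex.conj_mul']
  rw [traceAbsPow, ← htr]
  norm_num

lemma coef_eq_sum (A : QOp n) (s : Fin n → Fin 4) :
    coef A s =
      (2 ^ n : ℂ)⁻¹ * ∑ p : QIdx n × QIdx n, pauliString s p.1 p.2 * A p.2 p.1 := by
  rw [coef, ntrace, Fintype.sum_prod_type]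
  rfl

lemma coef_mul_conj_coef (A : QOp n) (s : Fin n → Fin 4) :
    coef A s * starRingEnd ℂ (coef A s) = (2 ^ n : ℂ)⁻¹ * (2 ^ n : ℂ)⁻¹ *
      ∑ p : QIdx n × QIdx n, ∑ q : QIdx n × QIdx n, A p.2 p.1 * starRingEnd ℂ (A q.2 q.1) *
        (pauliString s p.1 p.2 * starRingEnd ℂ (pauliString s q.1 q.2)) := by
  rw [coef_eq_sum, map_mul, map_sum, map_inv₀, map_pow, Complex.conj_ofNat, mul_mul_mul_comm,
    sum_mul_sum]
  congr 1
  exact sum_congr rfl fun p _ => sum_congr rfl fun q _ => by rw [map_mul]; ring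

lemma sum_norm_coef_sq (A : QOp n) :
    ∑ s, ‖coef A s‖ ^ 2 = (2 ^ n : ℝ)⁻¹ * ∑ x, ∑ y, ‖A x y‖ ^ 2 := by
  apply Complex.ofReal_injective
  calc ((∑ s, ‖coef A s‖ ^ 2 : ℝ) : ℂ)
      = ∑ s, coef A s * starRingEnd ℂ (coef A s) := by
        push_cast; simp only [Complex.mul_conj']
    _ = (2 ^ n : ℂ)⁻¹ * (2 ^ n : ℂ)⁻¹ *
        ∑ p : QIdx n × QIdx n, ∑ q : QIdx n × QIdx n, A p.2 p.1 * starRingEnd ℂ (A q.2 q.1) *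
            ∑ s, pauliString s p.1 p.2 * starRingEnd ℂ (pauliString s q.1 q.2) := by
        simp only [coef_mul_conj_coef, ← mul_sum]
        rw [sum_comm]
        refine congrArg _ (sum_congr rfl fun p _ => ?_)
        rw [sum_comm]
        simp only [mul_sum]
    _ = (2 ^ n : ℂ)⁻¹ * ∑ p : QIdx n × QIdx n, A p.2 p.1 * starRingEnd ℂ (A p.2 p.1) := by
        simp only [pauliString_completeness, ← Prod.ext_iff, mul_ite, mul_zero, sum_ite_eq,
          mem_univ, if_true, ← sum_mul]
        field_simp
    _ = _ := by
        rw [Fintype.sum_prod_type, sum_comm]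
        push_cast
        simp only [Complex.mul_conj']

theorem traceAbsPow_two_eq_sum_norm_coef_sq (A : QOp n) :
    traceAbsPow 2 A = ∑ s, ‖coef A s‖ ^ 2 := by
  rw [traceAbsPow_two, sum_norm_coef_sq]

lemma coef_noiseOp (δ : ℝ) (A : QOp n) (s : Fin n → Fin 4) :
    coef (noiseOp δ A) s = (δ : ℂ) ^ (psupp s).card * coef A s :=
  coef_sum_smul_pauliString _ s

lemma coef_dOp (j : Fin n) (A : QOp n) (s : Fin n → Fin 4) :
    coef (dOp j A) s = if s j ≠ 0 then coef A s else 0 := by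
  simp only [dOp, sum_filter, ← ite_zero_smul, coef_sum_smul_pauliString]

def softChunkSymbol (d : ℝ) (k : ℕ) : ℝ := (1 - 1 / (3 * d)) ^ k - (1 - 1 / (2 * d)) ^ k

lemma coef_softChunk (d : ℕ) (A : QOp n) (s : Fin n → Fin 4) :
    coef (softChunk d A) s = softChunkSymbol d (psupp s).card * coef A s := by
  rw [softChunk, coef_sub, coef_noiseOp, coef_noiseOp, softChunkSymbol]
  push_cast
  ring

lemma infPTotal_two_eq (B : QOp n) :
    infPTotal 2 B = ∑ s, (psupp s).card * ‖coef B s‖ ^ 2 := by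
  simp only [infPTotal, infP, traceAbsPow_two_eq_sum_norm_coef_sq, coef_dOp, apply_ite norm,
    norm_zero, ite_pow, zero_pow two_ne_zero]
  rw [sum_comm]
  refine sum_congr rfl fun s _ => ?_
  rw [← sum_filter, sum_const, nsmul_eq_mul]
  rfl

lemma infPTotal_two_nonneg (B : QOp n) : 0 ≤ infPTotal 2 B := by
  rw [infPTotal_two_eq]
  positivity

lemma var_eq_sum (A : QOp n) : var A = ∑ s ∈ univ.filter (· ≠ 0), ‖coef A s‖ ^ 2 := by
  rw [var, traceAbsPow_two_eq_sum_norm_coef_sq, sum_filter]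
  refine sum_congr rfl fun s _ => ?_
  rw [coef_sub, coef_smul, coef_one, ← coef_zero_eq_ntrace]
  split_ifs with h <;> simp_all

lemma card_psupp_eq_zero_iff (s : Fin n → Fin 4) : (psupp s).card = 0 ↔ s = 0 := by
  simp [psupp, funext_iff, filter_eq_empty_iff]

lemma card_psupp_le (s : Fin n → Fin 4) : (psupp s).card ≤ n :=
  (card_filter_le _ _).trans_eq (card_fin n)

lemma two_pow_le_and_lt_two_mul_iff_log_eq {k l : ℕ} (hk : k ≠ 0) :
    2 ^ l ≤ k ∧ k < 2 * 2 ^ l ↔ Nat.log 2 k = l := by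
  rw [Nat.log_eq_iff (Or.inr ⟨one_lt_two, hk⟩), pow_succ', mul_comm]

lemma var_eq_sum_wApprox (A : QOp n) : var A = ∑ l ∈ range (n + 1), wApprox (2 ^ l) A := by
  simp only [var_eq_sum, wApprox, sum_filter]
  rw [sum_comm]
  refine sum_congr rfl fun s _ => ?_
  by_cases hs : s = 0
  · simp [hs, (card_psupp_eq_zero_iff 0).2 rfl]
  · have hk := mt (card_psupp_eq_zero_iff s).1 hs
    have hlog : Nat.log 2 (psupp s).card < n + 1 :=
      Nat.lt_succ_of_le ((Nat.log_le_self 2 _).trans (card_psupp_le s))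
    simp [hs, two_pow_le_and_lt_two_mul_iff_log_eq hk, hlog]

lemma wApprox_eq_zero_of_lt {d : ℕ} (hd : n < d) (A : QOp n) : wApprox d A = 0 := by
  refine sum_eq_zero fun s hs => absurd (mem_filter.1 hs).2.1 ?_
  exact not_le.2 ((card_psupp_le s).trans_lt hd)

lemma one_sub_pow_mul_one_add_mul_le_one {t : ℝ} (ht0 : 0 ≤ t) (ht1 : t ≤ 1) (k : ℕ) :
    (1 - t) ^ k * (1 + k * t) ≤ 1 :=
  calc (1 - t) ^ k * (1 + k * t) ≤ (1 - t) ^ k * (1 + t) ^ k :=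
        mul_le_mul_of_nonneg_left (one_add_mul_le_pow (by linarith) k) (pow_nonneg (by linarith) k)
    _ = (1 - t ^ 2) ^ k := by rw [← mul_pow]; ring
    _ ≤ 1 := pow_le_one₀ (by nlinarith) (by nlinarith)

lemma softChunkSymbol_nonneg {d : ℝ} (hd : 1 / 2 ≤ d) (k : ℕ) :
    0 ≤ softChunkSymbol d k := by
  have hd0 : 0 < d := by linarith
  refine sub_nonneg.2 (pow_le_pow_left₀ ?_ ?_ k)
  · rw [sub_nonneg, div_le_one (by positivity)]; linarith
  · gcongr; norm_num

lemma softChunkSymbol_le {d : ℝ} (hd : 1 / 2 ≤ d) (k : ℕ) :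
    softChunkSymbol d k ≤ 1 / (1 + k / (3 * d)) := by
  have hd0 : 0 < d := by linarith
  have h2 : 0 ≤ (1 - 1 / (2 * d)) ^ k :=
    pow_nonneg (by rw [sub_nonneg, div_le_one (by positivity)]; linarith) k
  have h3 := one_sub_pow_mul_one_add_mul_le_one (t := 1 / (3 * d)) (by positivity)
    (by rw [div_le_one (by positivity)]; linarith) k
  have hx : (0 : ℝ) ≤ k / (3 * d) := by positivity
  rw [mul_one_div] at h3
  rw [softChunkSymbol, le_div_iff₀ (by positivity)]
  nlinarith

lemma div_mul_softChunkSymbol_sq_le {d : ℝ} (hd : 1 / 2 ≤ d) (k : ℕ) :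
    k / d * softChunkSymbol d k ^ 2 ≤
      10 * (k / d / (1 + k / d) - k / (2 * d) / (1 + k / (2 * d))) := by
  have hd0 : 0 < d := by linarith
  set x : ℝ := k / d with hx
  have hx0 : 0 ≤ x := by positivity
  have hx2 : k / (2 * d) = x / 2 := by rw [hx]; field_simp
  have hx3 : k / (3 * d) = x / 3 := by rw [hx]; field_simp
  have hS : softChunkSymbol d k ≤ 3 / (3 + x) := by
    have := softChunkSymbol_le hd k
    rwa [hx3, show 1 / (1 + x / 3) = 3 / (3 + x) by field_simp] at this
  have hrhs : x / (1 + x) - x / 2 / (1 + x / 2) = x / ((1 + x) * (2 + x)) := by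
    field_simp; ring
  calc x * softChunkSymbol d k ^ 2 ≤ x * (3 / (3 + x)) ^ 2 := by
        gcongr
        exact softChunkSymbol_nonneg hd k
    _ ≤ 10 * (x / ((1 + x) * (2 + x))) := by
        rw [div_pow, mul_div_assoc', mul_div_assoc',
          div_le_div_iff₀ (by positivity) (by positivity)]
        nlinarith [mul_nonneg hx0 (sq_nonneg x), sq_nonneg x]
    _ = _ := by rw [hx2, hrhs]

lemma sum_div_two_pow_mul_softChunkSymbol_sq_le (k L : ℕ) :
    ∑ l ∈ range L, k / 2 ^ l * softChunkSymbol (2 ^ l) k ^ 2 ≤ 10 := by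
  set g : ℕ → ℝ := fun l => k / 2 ^ l / (1 + k / 2 ^ l)
  have hg : ∀ l, 0 ≤ g l ∧ g l ≤ 1 := fun l =>
    ⟨by positivity, (div_le_one (by positivity)).2 (by linarith)⟩
  calc ∑ l ∈ range L, k / 2 ^ l * softChunkSymbol (2 ^ l) k ^ 2
      ≤ ∑ l ∈ range L, 10 * (g l - g (l + 1)) := by
        refine sum_le_sum fun l _ => ?_
        have := div_mul_softChunkSymbol_sq_le (d := 2 ^ l) (by
          linarith [one_le_pow₀ (M₀ := ℝ) (a := 2) one_le_two (n := l)]) k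
        simpa only [g, pow_succ'] using this
    _ = 10 * (g 0 - g L) := by rw [← mul_sum, sum_range_sub']
    _ ≤ 10 := by linarith [hg 0, hg L]

lemma infPTotal_softChunk_div_eq (d : ℕ) (A : QOp n) :
    infPTotal 2 (softChunk d A) / d =
      ∑ s, (psupp s).card / d * softChunkSymbol d (psupp s).card ^ 2 * ‖coef A s‖ ^ 2 := by
  simp only [infPTotal_two_eq, coef_softChunk, norm_mul, Complex.norm_real, Real.norm_eq_abs,
    mul_pow, sq_abs, sum_div]
  exact sum_congr rfl fun s _ => by ring

lemma sum_infPTotal_softChunk_div_le (A : QOp n) (L : ℕ) :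
    ∑ l ∈ range L, infPTotal 2 (softChunk (2 ^ l) A) / 2 ^ l ≤ 10 * var A := by
  have hterm : ∀ l, infPTotal 2 (softChunk (2 ^ l) A) / 2 ^ l =
      ∑ s, (psupp s).card / 2 ^ l * softChunkSymbol (2 ^ l) (psupp s).card ^ 2 *
        ‖coef A s‖ ^ 2 := fun l => by exact_mod_cast infPTotal_softChunk_div_eq (2 ^ l) A
  calc ∑ l ∈ range L, infPTotal 2 (softChunk (2 ^ l) A) / 2 ^ l
      = ∑ s, (∑ l ∈ range L, (psupp s).card / 2 ^ l *
          softChunkSymbol (2 ^ l) (psupp s).card ^ 2) * ‖coef A s‖ ^ 2 := by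
        simp only [hterm, sum_mul]
        exact sum_comm
    _ = ∑ s ∈ univ.filter (· ≠ 0), (∑ l ∈ range L, (psupp s).card / 2 ^ l *
          softChunkSymbol (2 ^ l) (psupp s).card ^ 2) * ‖coef A s‖ ^ 2 := by
        refine (sum_filter_of_ne fun s _ hs => ?_).symm
        contrapose! hs
        simp [hs, (card_psupp_eq_zero_iff 0).2 rfl]
    _ ≤ ∑ s ∈ univ.filter (· ≠ 0), 10 * ‖coef A s‖ ^ 2 :=
        sum_le_sum fun s _ => mul_le_mul_of_nonneg_right
          (sum_div_two_pow_mul_softChunkSymbol_sq_le _ L) (sq_nonneg _)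
    _ = 10 * var A := by rw [var_eq_sum, mul_sum]

def goodScales (A : QOp n) : Set ℕ :=
  {m | (1 / 20) * infPTotal 2 (softChunk (2 ^ m) A) ≤ (2 ^ m : ℝ) * wApprox (2 ^ m) A}

lemma tsum_indicator_wApprox_eq_sum (S : Set ℕ) (A : QOp n) :
    ∑' l, S.indicator (fun m => wApprox (2 ^ m) A) l =
      ∑ l ∈ range (n + 1), S.indicator (fun m => wApprox (2 ^ m) A) l := by
  refine tsum_eq_sum fun l hl => ?_
  have hn : n < 2 ^ l := lt_trans (by simpa using hl) Nat.lt_two_pow_self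
  simp [wApprox_eq_zero_of_lt hn]

lemma var_eq_sum_indicator_add_sum_indicator_compl (S : Set ℕ) (A : QOp n) :
    var A = ∑ l ∈ range (n + 1), S.indicator (fun m => wApprox (2 ^ m) A) l +
      ∑ l ∈ range (n + 1), Sᶜ.indicator (fun m => wApprox (2 ^ m) A) l := by
  rw [var_eq_sum_wApprox, ← sum_add_distrib]
  simp only [Set.indicator_self_add_compl_apply]

lemma indicator_compl_goodScales_le (A : QOp n) (l : ℕ) :
    (goodScales A)ᶜ.indicator (fun m => wApprox (2 ^ m) A) l ≤
      1 / 20 * (infPTotal 2 (softChunk (2 ^ l) A) / 2 ^ l) := by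
  by_cases hl : l ∈ goodScales A
  · rw [Set.indicator_of_notMem (Set.notMem_compl_iff.2 hl)]
    have := infPTotal_two_nonneg (softChunk (2 ^ l) A)
    positivity
  · rw [Set.indicator_of_mem hl, mul_div_assoc', le_div_iff₀ (by positivity), mul_comm]
    exact (not_le.1 hl).le

lemma sum_indicator_compl_goodScales_le (A : QOp n) (L : ℕ) :
    ∑ l ∈ range L, (goodScales A)ᶜ.indicator (fun m => wApprox (2 ^ m) A) l ≤ var A / 2 :=
  calc ∑ l ∈ range L, (goodScales A)ᶜ.indicator (fun m => wApprox (2 ^ m) A) l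
      ≤ 1 / 20 * ∑ l ∈ range L, infPTotal 2 (softChunk (2 ^ l) A) / 2 ^ l := by
        rw [mul_sum]
        exact sum_le_sum fun l _ => indicator_compl_goodScales_le A l
    _ ≤ 1 / 20 * (10 * var A) := by gcongr; exact sum_infPTotal_softChunk_div_le A L
    _ = var A / 2 := by ring

end

/-- **Lemma 3.10**: `Var[A] ≤ 2 ∑_{d ∈ G_good} W_{≈d}[A]`, where
`G_good = {d = 2ˡ : d · W_{≈d}[A] ≥ Inf[B_d]/20}` and `B_d` is the soft chunk. -/
theorem var_le_good_chunks' (n : ℕ) (A : QOp n) :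
    var A ≤ 2 * ∑' l : ℕ,
      {m : ℕ | (1 / 20) * infPTotal 2 (softChunk (2 ^ m) A)
          ≤ (2 ^ m : ℝ) * wApprox (2 ^ m) A}.indicator
        (fun m => wApprox (2 ^ m) A) l := by
  change var A ≤ 2 * ∑' l, (goodScales A).indicator _ l
  rw [tsum_indicator_wApprox_eq_sum]
  linarith [var_eq_sum_indicator_add_sum_indicator_compl (goodScales A) A,
    sum_indicator_compl_goodScales_le A (n + 1)]

end
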